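/- Let L be a monolithic Leibniz algebra. Then L is a strongly solvable A-algebra if and only if L is metabelian and L = L² ∔ B for some subalgebra B of L such that [L²,b] = L² for every nonzero b ∈ B (equivalently, the right multiplication R_b restricted to L² is invertible for every nonzero b ∈ B). -/

import Mathlib

/-- A (right) Leibniz algebra structure on an `F`-vector space `L`:
a bilinear bracket satisfying `[x,[y,z]] = [[x,y],z] - [[x,z],y]`. -/
structure LeibnizAlg (F : Type*) (L : Type*) [Field F] [AddCommGroup L] [Module F L] where
  bracket : L →ₗ[F] L →ₗ[F] L
  leibniz : ∀ x y z : L,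
    bracket x (bracket y z) = bracket (bracket x y) z - bracket (bracket x z) y

namespace LeibnizAlg

variable {F : Type*} {L : Type*} [Field F] [AddCommGroup L] [Module F L]

/-- The product `[M, N]` of two subspaces: the span of all brackets `[m, n]`. -/
def prod (A : LeibnizAlg F L) (M N : Submodule F L) : Submodule F L :=
  Submodule.span F {z : L | ∃ m ∈ M, ∃ n ∈ N, z = A.bracket m n}

/-- A subalgebra: a subspace closed under the product. -/
def IsSubalgebra (A : LeibnizAlg F L) (S : Submodule F L) : Prop :=
  A.prod S S ≤ S

/-- A (two-sided) ideal: `[I, L] ⊆ I` and `[L, I] ⊆ I`. -/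
def IsIdeal (A : LeibnizAlg F L) (I : Submodule F L) : Prop :=
  A.prod I ⊤ ≤ I ∧ A.prod ⊤ I ≤ I

/-- Lower central series of a subspace `U`: `lcs U 0 = U = U¹`,
`lcs U k = U^(k+1)`, i.e. `lcs U (k+1) = [lcs U k, U]`. -/
def lcs (A : LeibnizAlg F L) (U : Submodule F L) : ℕ → Submodule F L
  | 0 => U
  | k + 1 => A.prod (lcs A U k) U

/-- `U` is nilpotent: `U^(n+1) = 0` for some `n`. -/
def IsNilpotentSub (A : LeibnizAlg F L) (U : Submodule F L) : Prop :=
  ∃ n : ℕ, A.lcs U n = ⊥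

/-- `U` is abelian: `[U, U] = 0`. -/
def IsAbelian (A : LeibnizAlg F L) (U : Submodule F L) : Prop :=
  A.prod U U = ⊥

/-- An `A`-algebra: every nilpotent subalgebra is abelian. -/
def IsAAlgebra (A : LeibnizAlg F L) : Prop :=
  ∀ U : Submodule F L, A.IsSubalgebra U → A.IsNilpotentSub U → A.IsAbelian U

/-- Derived series: `derSeries 0 = L`, `derSeries (k+1) = [derSeries k, derSeries k]`. -/
def derSeries (A : LeibnizAlg F L) : ℕ → Submodule F L
  | 0 => ⊤
  | k + 1 => A.prod (derSeries A k) (derSeries A k)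

/-- `L` is solvable: some term of the derived series vanishes. -/
def IsSolvable (A : LeibnizAlg F L) : Prop :=
  ∃ n : ℕ, A.derSeries n = ⊥

/-- The centralizer `Z_L(U)` of a subspace `U`. -/
def centralizer (A : LeibnizAlg F L) (U : Submodule F L) : Submodule F L where
  carrier := {x : L | ∀ u ∈ U, A.bracket x u = 0 ∧ A.bracket u x = 0}
  add_mem' := by
    intro a b ha hb u hu
    refine ⟨?_, ?_⟩
    · rw [map_add, LinearMap.add_apply, (ha u hu).1, (hb u hu).1, add_zero]
    · rw [map_add, (ha u hu).2, (hb u hu).2, add_zero]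
  zero_mem' := by
    intro u hu
    refine ⟨?_, ?_⟩
    · rw [map_zero, LinearMap.zero_apply]
    · rw [map_zero]
  smul_mem' := by
    intro c a ha u hu
    refine ⟨?_, ?_⟩
    · rw [map_smul, LinearMap.smul_apply, (ha u hu).1, smul_zero]
    · rw [map_smul, (ha u hu).2, smul_zero]

/-- The centre of the subalgebra `M`: elements of `M` centralizing `M`. -/
def centerOf (A : LeibnizAlg F L) (M : Submodule F L) : Submodule F L :=
  M ⊓ A.centralizer M

/-- `N` is the nilradical: the largest nilpotent ideal. -/
def IsNilradical (A : LeibnizAlg F L) (N : Submodule F L) : Prop :=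
  A.IsIdeal N ∧ A.IsNilpotentSub N ∧
    ∀ I : Submodule F L, A.IsIdeal I → A.IsNilpotentSub I → I ≤ N

/-- A minimal ideal: a nonzero ideal containing no ideal other than `0` and itself. -/
def IsMinimalIdeal (A : LeibnizAlg F L) (I : Submodule F L) : Prop :=
  A.IsIdeal I ∧ I ≠ ⊥ ∧ ∀ J : Submodule F L, A.IsIdeal J → J ≤ I → J = ⊥ ∨ J = I

/-- A maximal subalgebra. -/
def IsMaximalSubalgebra (A : LeibnizAlg F L) (M : Submodule F L) : Prop :=
  A.IsSubalgebra M ∧ M ≠ ⊤ ∧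
    ∀ S : Submodule F L, A.IsSubalgebra S → M ≤ S → S = M ∨ S = ⊤

/-- `L` is φ-free: every ideal contained in all maximal subalgebras is zero. -/
def IsPhiFree (A : LeibnizAlg F L) : Prop :=
  ∀ I : Submodule F L, A.IsIdeal I →
    (∀ M : Submodule F L, A.IsMaximalSubalgebra M → I ≤ M) → I = ⊥

/-- `Asoc L`: the sum of the abelian minimal ideals. -/
def asoc (A : LeibnizAlg F L) : Submodule F L :=
  sSup {I : Submodule F L | A.IsMinimalIdeal I ∧ A.IsAbelian I}

/-- A Cartan subalgebra: a nilpotent, self-normalizing subalgebra. -/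
def IsCartan (A : LeibnizAlg F L) (C : Submodule F L) : Prop :=
  A.IsSubalgebra C ∧ A.IsNilpotentSub C ∧
    ∀ x : L, (∀ c ∈ C, A.bracket x c ∈ C ∧ A.bracket c x ∈ C) → x ∈ C

/-- A maximal nilpotent subalgebra. -/
def IsMaxNilpotentSubalgebra (A : LeibnizAlg F L) (U : Submodule F L) : Prop :=
  A.IsSubalgebra U ∧ A.IsNilpotentSub U ∧
    ∀ V : Submodule F L, A.IsSubalgebra V → A.IsNilpotentSub V → U ≤ V → V = U

end LeibnizAlg


/-!
Write `N = L²` and `R_x` for right multiplication, a derivation of `L` with image in `N`.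
Let `M ⊇ N` be abelian. For `m ∈ M` the Leibniz identity gives `R_x [m, z] = [R_x m, z]` and
`R_x [z, m] = [z, R_x m]`, so both pieces of the Fitting decomposition of `R_x` on `M` are ideals
of `L`; as two nonzero ideals of a monolithic algebra meet, `R_x` is nilpotent or bijective on `M`.
If `R_x` is nilpotent on `M`, then `M + Fx` is a nilpotent subalgebra, hence abelian in an
A-algebra.

Now let `N` be abelian and `x ∉ N`. If `R_x` were nilpotent on `N`, then `M = N + Fx` would be
abelian, and no `R_y` could be bijective on `M` (its image lies in `N`); so every `M + Fy` would be
abelian, giving `[N, L] = 0`, i.e. `L` nilpotent, hence abelian. So `R_x` is bijective on `N` for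
every `x ∉ N`, and `B = ker R_x` is a complementary subalgebra.

Conversely, a nilpotent subalgebra `U ⊄ N` contains some `u = n + b` with `0 ≠ b ∈ B`; `R_u`
agrees with `R_b` on `N`, so it is injective there, and since every `U^(k+1)` lies in `N` and
`R_u` maps it into `U^(k+2)`, the vanishing of some `U^k` propagates down to `U² = 0`.
-/

theorem LinearMap.map_eq_self_iff_injOn {K V : Type*} [DivisionRing K] [AddCommGroup V]
    [Module K V] {p : Submodule K V} [FiniteDimensional K p] {f : V →ₗ[K] V}
    (h : ∀ x ∈ p, f x ∈ p) : p.map f = p ↔ Set.InjOn f p := by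
  rw [LinearMap.injOn_iff_surjOn h, Set.SurjOn, ← Submodule.map_coe, SetLike.coe_subset_coe]
  exact ⟨fun hp => hp.ge, fun hp => le_antisymm (Submodule.map_le_iff_le_comap.2 h) hp⟩

theorem Module.End.pow_apply_comm_of_forall_mem {R V : Type*} [Semiring R] [AddCommMonoid V]
    [Module R V] {f g : Module.End R V} {M : Submodule R V} (hfM : ∀ m ∈ M, f m ∈ M)
    (hfg : ∀ m ∈ M, f (g m) = g (f m)) (k : ℕ) {m : V} (hm : m ∈ M) :
    (f ^ k) (g m) = g ((f ^ k) m) := by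
  induction k generalizing m with
  | zero => rfl
  | succ k ih =>
    rw [pow_succ, Module.End.mul_apply, Module.End.mul_apply, hfg m hm, ih (hfM m hm)]

namespace LeibnizAlg

variable {F L : Type*} [Field F] [AddCommGroup L] [Module F L] (A : LeibnizAlg F L)

theorem bracket_mem_prod {M N : Submodule F L} {m n : L} (hm : m ∈ M) (hn : n ∈ N) :
    A.bracket m n ∈ A.prod M N :=
  Submodule.subset_span ⟨m, hm, n, hn, rfl⟩

theorem prod_le_iff {M N P : Submodule F L} :
    A.prod M N ≤ P ↔ ∀ m ∈ M, ∀ n ∈ N, A.bracket m n ∈ P := by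
  refine ⟨fun h m hm n hn => h (A.bracket_mem_prod hm hn), fun h => Submodule.span_le.2 ?_⟩
  rintro z ⟨m, hm, n, hn, rfl⟩
  exact h m hm n hn

theorem prod_eq_bot_iff {M N : Submodule F L} :
    A.prod M N = ⊥ ↔ ∀ m ∈ M, ∀ n ∈ N, A.bracket m n = 0 := by
  simp only [eq_bot_iff, prod_le_iff, Submodule.mem_bot]

theorem bracket_mem_derSeries_one (y z : L) : A.bracket y z ∈ A.derSeries 1 :=
  A.bracket_mem_prod Submodule.mem_top Submodule.mem_top

theorem prod_le_derSeries_one (M N : Submodule F L) : A.prod M N ≤ A.derSeries 1 :=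
  A.prod_le_iff.2 fun m _ n _ => A.bracket_mem_derSeries_one m n

theorem flip_mem_of_derSeries_one_le {M : Submodule F L} (hM : A.derSeries 1 ≤ M) (x m : L) :
    A.bracket.flip x m ∈ M :=
  hM (A.bracket_mem_derSeries_one m x)

theorem isSubalgebra_of_derSeries_one_le {M : Submodule F L} (hM : A.derSeries 1 ≤ M) :
    A.IsSubalgebra M :=
  (A.prod_le_derSeries_one M M).trans hM

theorem isIdeal_iff {I : Submodule F L} :
    A.IsIdeal I ↔ ∀ m ∈ I, ∀ z, A.bracket m z ∈ I ∧ A.bracket z m ∈ I := by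
  simp only [IsIdeal, prod_le_iff, Submodule.mem_top, true_implies]
  exact ⟨fun h m hm z => ⟨h.1 m hm z, h.2 z m hm⟩,
    fun h => ⟨fun m hm z => (h m hm z).1, fun z m hm => (h m hm z).2⟩⟩

theorem flip_bracket (x y z : L) :
    A.bracket.flip x (A.bracket y z) =
      A.bracket (A.bracket.flip x y) z + A.bracket y (A.bracket.flip x z) := by
  simp only [LinearMap.flip_apply, A.leibniz y z x]
  abel

theorem isSubalgebra_ker_flip (x : L) : A.IsSubalgebra (LinearMap.ker (A.bracket.flip x)) := by
  refine A.prod_le_iff.2 fun m hm n hn => ?_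
  rw [LinearMap.mem_ker] at hm hn ⊢
  rw [flip_bracket, hm, hn, map_zero, LinearMap.zero_apply, map_zero, add_zero]

theorem exists_isMinimalIdeal_le [FiniteDimensional F L] {I : Submodule F L}
    (hI : A.IsIdeal I) (hI0 : I ≠ ⊥) : ∃ J ≤ I, A.IsMinimalIdeal J := by
  obtain ⟨J, hJI, ⟨hJ, hJ0⟩, hmin⟩ :=
    exists_minimal_le_of_wellFoundedLT (fun J => A.IsIdeal J ∧ J ≠ ⊥) I ⟨hI, hI0⟩
  refine ⟨J, hJI, hJ, hJ0, fun J' hJ' hJ'J => or_iff_not_imp_left.2 fun hJ'0 => ?_⟩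
  exact le_antisymm hJ'J (hmin ⟨hJ', hJ'0⟩ hJ'J)

theorem inf_ne_bot_of_forall_isMinimalIdeal_eq [FiniteDimensional F L] {W : Submodule F L}
    (hmono : ∀ I : Submodule F L, A.IsMinimalIdeal I → I = W) {I J : Submodule F L}
    (hI : A.IsIdeal I) (hJ : A.IsIdeal J) (hI0 : I ≠ ⊥) (hJ0 : J ≠ ⊥) : I ⊓ J ≠ ⊥ := by
  obtain ⟨I', hI'I, hI'⟩ := A.exists_isMinimalIdeal_le hI hI0
  obtain ⟨J', hJ'J, hJ'⟩ := A.exists_isMinimalIdeal_le hJ hJ0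
  have hW0 : W ≠ ⊥ := hmono I' hI' ▸ hI'.2.1
  exact ne_bot_of_le_ne_bot hW0 (le_inf (hmono I' hI' ▸ hI'I) (hmono J' hJ' ▸ hJ'J))

section AbelianOverDerived

variable {A} {M : Submodule F L} (hM : A.derSeries 1 ≤ M) (hab : A.IsAbelian M)
include hM hab

theorem flip_pow_bracket_of_mem (x : L) (k : ℕ) {m : L} (hm : m ∈ M) (z : L) :
    (A.bracket.flip x ^ k) (A.bracket m z) = A.bracket ((A.bracket.flip x ^ k) m) z ∧
      (A.bracket.flip x ^ k) (A.bracket z m) = A.bracket z ((A.bracket.flip x ^ k) m) := by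
  have hbr := A.prod_eq_bot_iff.1 hab
  have hfM : ∀ m ∈ M, A.bracket.flip x m ∈ M := fun m _ => A.flip_mem_of_derSeries_one_le hM x m
  refine ⟨Module.End.pow_apply_comm_of_forall_mem (g := A.bracket.flip z) hfM
    (fun m hm => ?_) k hm, Module.End.pow_apply_comm_of_forall_mem hfM (fun m hm => ?_) k hm⟩
  · show A.bracket.flip x (A.bracket m z) = A.bracket (A.bracket.flip x m) z
    rw [flip_bracket, hbr m hm _ (A.flip_mem_of_derSeries_one_le hM x z), add_zero]
  · rw [flip_bracket, hbr _ (A.flip_mem_of_derSeries_one_le hM x z) m hm, zero_add]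

theorem isIdeal_inf_ker_flip_pow (x : L) (k : ℕ) :
    A.IsIdeal (M ⊓ LinearMap.ker (A.bracket.flip x ^ k)) := by
  refine A.isIdeal_iff.2 fun m ⟨hmM, hm0⟩ z => ?_
  rw [SetLike.mem_coe, LinearMap.mem_ker] at hm0
  obtain ⟨hl, hr⟩ := flip_pow_bracket_of_mem hM hab x k hmM z
  exact ⟨⟨hM (A.bracket_mem_derSeries_one m z), by simp [hl, hm0]⟩,
    ⟨hM (A.bracket_mem_derSeries_one z m), by simp [hr, hm0]⟩⟩

theorem isIdeal_map_flip_pow (x : L) (k : ℕ) : A.IsIdeal (M.map (A.bracket.flip x ^ k)) := by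
  refine A.isIdeal_iff.2 ?_
  rintro _ ⟨m, hm, rfl⟩ z
  obtain ⟨hl, hr⟩ := flip_pow_bracket_of_mem hM hab x k hm z
  exact ⟨⟨_, hM (A.bracket_mem_derSeries_one m z), hl⟩,
    ⟨_, hM (A.bracket_mem_derSeries_one z m), hr⟩⟩

theorem flip_pow_eq_zero_or_map_flip_eq [FiniteDimensional F L] {W : Submodule F L}
    (hmono : ∀ I : Submodule F L, A.IsMinimalIdeal I → I = W) (x : L) :
    (∃ k, ∀ m ∈ M, (A.bracket.flip x ^ k) m = 0) ∨ M.map (A.bracket.flip x) = M := by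
  set f := A.bracket.flip x
  obtain ⟨n, hn1, hfit⟩ := ((Filter.eventually_ge_atTop 1).and
    (LinearMap.eventually_isCompl_ker_pow_range_pow f)).exists
  by_cases himage : M.map (f ^ n) = ⊥
  · refine Or.inl ⟨n, fun m hm => ?_⟩
    simpa [himage] using Submodule.mem_map_of_mem (f := f ^ n) hm
  by_cases hker : M ⊓ LinearMap.ker (f ^ n) = ⊥
  · have hker1 : LinearMap.ker f ≤ LinearMap.ker (f ^ n) := by
      simpa using f.iterateKer.monotone hn1
    refine Or.inr ((LinearMap.map_eq_self_iff_injOn fun m _ =>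
      A.flip_mem_of_derSeries_one_le hM x m).2 (LinearMap.injOn_of_disjoint_ker le_rfl ?_))
    exact disjoint_iff.2 (eq_bot_iff.2 ((inf_le_inf_left M hker1).trans hker.le))
  refine absurd ?_ (A.inf_ne_bot_of_forall_isMinimalIdeal_eq hmono
    (isIdeal_inf_ker_flip_pow hM hab x n) (isIdeal_map_flip_pow hM hab x n) hker himage)
  exact eq_bot_iff.2 ((inf_le_inf inf_le_right (LinearMap.map_le_range)).trans
    hfit.inf_eq_bot.le)

theorem isAbelian_sup_span_of_flip_pow_eq_zero (hA : A.IsAAlgebra) {x : L} {k : ℕ}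
    (hk : ∀ m ∈ M, (A.bracket.flip x ^ k) m = 0) :
    A.IsAbelian (M ⊔ Submodule.span F {x}) := by
  set U := M ⊔ Submodule.span F {x}
  have hbr := A.prod_eq_bot_iff.1 hab
  have hlcs : ∀ j, A.lcs U (j + 1) ≤ M.map (A.bracket.flip x ^ j) := by
    intro j
    induction j with
    | zero =>
      rw [pow_zero, Module.End.one_eq_id, Submodule.map_id]
      exact (A.prod_le_derSeries_one U U).trans hM
    | succ j ih =>
      refine A.prod_le_iff.2 fun y hy u hu => ?_
      obtain ⟨m, hm, rfl⟩ := ih hy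
      obtain ⟨n, hn, v, hv, rfl⟩ := Submodule.mem_sup.1 hu
      obtain ⟨c, rfl⟩ := Submodule.mem_span_singleton.1 hv
      have hjm : (A.bracket.flip x ^ j) m ∈ M :=
        Module.End.pow_apply_mem_of_forall_mem j (fun m _ => A.flip_mem_of_derSeries_one_le hM x m)
          m hm
      rw [map_add, hbr _ hjm n hn, zero_add, map_smul]
      refine Submodule.smul_mem _ c ⟨m, hm, ?_⟩
      rw [pow_succ', Module.End.mul_apply, LinearMap.flip_apply]
  refine hA U (A.isSubalgebra_of_derSeries_one_le (hM.trans le_sup_left)) ⟨k + 1, ?_⟩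
  refine eq_bot_iff.2 ((hlcs k).trans ?_)
  rintro _ ⟨m, hm, rfl⟩
  exact (Submodule.mem_bot F).2 (hk m hm)

end AbelianOverDerived

theorem IsAAlgebra.derSeries_one_eq_bot {A : LeibnizAlg F L} (hA : A.IsAAlgebra)
    (h : ∀ m ∈ A.derSeries 1, ∀ y, A.bracket m y = 0) : A.derSeries 1 = ⊥ :=
  hA ⊤ le_top ⟨2, A.prod_eq_bot_iff.2 fun m hm y _ => h m hm y⟩

theorem map_flip_derSeries_one_eq [FiniteDimensional F L] {W : Submodule F L}
    (hmono : ∀ I : Submodule F L, A.IsMinimalIdeal I → I = W) (hA : A.IsAAlgebra)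
    (hab : A.IsAbelian (A.derSeries 1)) {x : L} (hx : x ∉ A.derSeries 1) :
    (A.derSeries 1).map (A.bracket.flip x) = A.derSeries 1 := by
  set N := A.derSeries 1
  refine (flip_pow_eq_zero_or_map_flip_eq le_rfl hab hmono x).elim (fun ⟨k, hk⟩ => ?_) id
  set M := N ⊔ Submodule.span F {x}
  have hNM : N ≤ M := le_sup_left
  have habM := isAbelian_sup_span_of_flip_pow_eq_zero le_rfl hab hA hk
  have hNL : ∀ m ∈ N, ∀ y, A.bracket m y = 0 := by
    intro m hm y
    have hnot_surj : M.map (A.bracket.flip y) ≠ M := fun hmap => hx <| by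
      obtain ⟨z, -, hz⟩ : x ∈ M.map (A.bracket.flip y) :=
        by rw [hmap]; exact Submodule.mem_sup_right (Submodule.mem_span_singleton_self x)
      exact hz ▸ A.bracket_mem_derSeries_one z y
    obtain ⟨j, hj⟩ := (flip_pow_eq_zero_or_map_flip_eq hNM habM hmono y).resolve_right hnot_surj
    exact A.prod_eq_bot_iff.1 (isAbelian_sup_span_of_flip_pow_eq_zero hNM habM hA hj) m
      (Submodule.mem_sup_left (Submodule.mem_sup_left hm)) y
      (Submodule.mem_sup_right (Submodule.mem_span_singleton_self y))
  have hN0 : N = ⊥ := hA.derSeries_one_eq_bot hNL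
  rw [hN0, Submodule.map_bot]

theorem exists_isSubalgebra_complement_of_map_flip_eq [FiniteDimensional F L]
    (hN : ∀ x ∉ A.derSeries 1, (A.derSeries 1).map (A.bracket.flip x) = A.derSeries 1) :
    ∃ B : Submodule F L, A.IsSubalgebra B ∧
      A.derSeries 1 ⊓ B = ⊥ ∧ A.derSeries 1 ⊔ B = ⊤ ∧
      ∀ b ∈ B, b ≠ 0 → (A.derSeries 1).map (A.bracket.flip b) = A.derSeries 1 := by
  set N := A.derSeries 1
  by_cases hNtop : N = ⊤
  · refine ⟨⊥, A.prod_le_iff.2 fun m hm _ _ => ?_, inf_bot_eq _, by rw [sup_bot_eq, hNtop],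
      fun b hb hb0 => absurd ((Submodule.mem_bot F).1 hb) hb0⟩
    rw [(Submodule.mem_bot F).1 hm, map_zero, LinearMap.zero_apply]
    exact zero_mem _
  obtain ⟨x, -, hx⟩ := SetLike.exists_of_lt (lt_top_iff_ne_top.2 hNtop)
  have hinj : Set.InjOn (A.bracket.flip x) N :=
    (LinearMap.map_eq_self_iff_injOn fun m _ => A.bracket_mem_derSeries_one m x).1 (hN x hx)
  have hinf : N ⊓ LinearMap.ker (A.bracket.flip x) = ⊥ := by
    refine eq_bot_iff.2 fun z ⟨hzN, hzB⟩ => (Submodule.mem_bot F).2 ?_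
    exact hinj hzN (zero_mem N) ((LinearMap.mem_ker.1 hzB).trans (map_zero _).symm)
  refine ⟨_, A.isSubalgebra_ker_flip x, hinf, eq_top_iff.2 fun z _ => ?_,
    fun b hb hb0 => hN b fun hbN => hb0 ((Submodule.mem_bot F).1 (hinf ▸ ⟨hbN, hb⟩))⟩
  obtain ⟨m, hm, hxm⟩ : A.bracket.flip x z ∈ N.map (A.bracket.flip x) :=
    (hN x hx).symm ▸ A.bracket_mem_derSeries_one z x
  exact Submodule.mem_sup.2 ⟨m, hm, z - m, by rw [LinearMap.mem_ker, map_sub, hxm, sub_self],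
    add_sub_cancel m z⟩

theorem isAbelian_of_injOn_flip {U : Submodule F L} (hU : A.IsNilpotentSub U) {u : L}
    (hu : u ∈ U) (hinj : Set.InjOn (A.bracket.flip u) (A.derSeries 1)) : A.IsAbelian U := by
  obtain ⟨n, hn⟩ := hU
  have hdesc : ∀ k, A.lcs U (k + 2) = ⊥ → A.lcs U (k + 1) = ⊥ := fun k hk =>
    (Submodule.eq_bot_iff _).2 fun y hy => hinj (A.prod_le_derSeries_one _ _ hy) (zero_mem _)
      ((Submodule.mem_bot F).1 (hk ▸ A.bracket_mem_prod hy hu) |>.trans (map_zero _).symm)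
  have hdown : ∀ k, A.lcs U (k + 1) = ⊥ → A.lcs U 1 = ⊥ := by
    intro k
    induction k with
    | zero => exact id
    | succ k ih => exact fun hk => ih (hdesc k hk)
  refine hdown n (A.prod_eq_bot_iff.2 fun m hm _ _ => ?_)
  rw [hn, Submodule.mem_bot] at hm
  rw [hm, map_zero, LinearMap.zero_apply]

theorem isAAlgebra_of_sup_eq_top [FiniteDimensional F L] (hab : A.IsAbelian (A.derSeries 1))
    {B : Submodule F L} (hsup : A.derSeries 1 ⊔ B = ⊤)
    (hB : ∀ b ∈ B, b ≠ 0 → (A.derSeries 1).map (A.bracket.flip b) = A.derSeries 1) :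
    A.IsAAlgebra := by
  set N := A.derSeries 1
  have hbr := A.prod_eq_bot_iff.1 hab
  intro U _ hU
  by_cases hUN : U ≤ N
  · exact A.prod_eq_bot_iff.2 fun m hm n hn => hbr m (hUN hm) n (hUN hn)
  obtain ⟨u, hu, huN⟩ := SetLike.not_le_iff_exists.1 hUN
  obtain ⟨n, hn, b, hb, rfl⟩ := Submodule.mem_sup.1 (hsup ▸ Submodule.mem_top : u ∈ N ⊔ B)
  have hb0 : b ≠ 0 := by
    rintro rfl
    exact huN (by simpa using hn)
  have hinj : Set.InjOn (A.bracket.flip b) N :=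
    (LinearMap.map_eq_self_iff_injOn fun m _ => A.bracket_mem_derSeries_one m b).1 (hB b hb hb0)
  refine A.isAbelian_of_injOn_flip hU hu (hinj.congr fun y hy => ?_)
  rw [LinearMap.flip_apply, LinearMap.flip_apply, map_add, hbr y hy n hn, zero_add]

end LeibnizAlg

theorem monolithic_strongly_solvable_A_algebra_iff_general
    {F L : Type*} [Field F] [AddCommGroup L] [Module F L] [FiniteDimensional F L]
    (A : LeibnizAlg F L)
    (W : Submodule F L)
    (hmono : ∀ I : Submodule F L, A.IsMinimalIdeal I → I = W) :
    (A.IsNilpotentSub (A.derSeries 1) ∧ A.IsAAlgebra) ↔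
      (A.IsAbelian (A.derSeries 1) ∧
        ∃ B : Submodule F L, A.IsSubalgebra B ∧
          A.derSeries 1 ⊓ B = ⊥ ∧ A.derSeries 1 ⊔ B = ⊤ ∧
          ∀ b ∈ B, b ≠ 0 →
            Submodule.map (A.bracket.flip b) (A.derSeries 1) = A.derSeries 1) := by
  constructor
  · rintro ⟨hnil, hA⟩
    have hab : A.IsAbelian (A.derSeries 1) :=
      hA _ (A.isSubalgebra_of_derSeries_one_le le_rfl) hnil
    exact ⟨hab, A.exists_isSubalgebra_complement_of_map_flip_eq fun x hx =>
      A.map_flip_derSeries_one_eq hmono hA hab hx⟩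
  · rintro ⟨hab, B, -, -, hsup, hB⟩
    exact ⟨⟨1, hab⟩, A.isAAlgebra_of_sup_eq_top hab hsup hB⟩

/-- Let `L` be a monolithic Leibniz algebra.  Then `L` is a strongly
solvable A-algebra if and only if `L` is metabelian and `L = L² ∔ B` for some subalgebra
`B` of `L` such that `[L², b] = L²` for every nonzero `b ∈ B`. -/
theorem monolithic_strongly_solvable_A_algebra_iff
    {F L : Type*} [Field F] [AddCommGroup L] [Module F L] [FiniteDimensional F L]
    (A : LeibnizAlg F L)
    (W : Submodule F L) (hW : A.IsMinimalIdeal W)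
    (hmono : ∀ I : Submodule F L, A.IsMinimalIdeal I → I = W) :
    (A.IsNilpotentSub (A.derSeries 1) ∧ A.IsAAlgebra) ↔
      (A.IsAbelian (A.derSeries 1) ∧
        ∃ B : Submodule F L, A.IsSubalgebra B ∧
          A.derSeries 1 ⊓ B = ⊥ ∧ A.derSeries 1 ⊔ B = ⊤ ∧
          ∀ b ∈ B, b ≠ 0 →
            Submodule.map (A.bracket.flip b) (A.derSeries 1) = A.derSeries 1) :=
  monolithic_strongly_solvable_A_algebra_iff_general A W hmono
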